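/- A tree T is not accepted by A_{▷⟨E;U⟩} if and only if either (a) T has at least |E|+1 direct subtrees each accepted by no automaton A_u for u ∈ U, or (b) there exists k with 0 ≤ k ≤ |E| such that T has at least k direct subtrees accepted by no A_u (u ∈ U), and there do not exist |E| direct subtrees witnessing satisfaction of the existential part E of which at least k are accepted by no A_u (u ∈ U). -/

import Mathlib

/-- A `Σ`-labelled tree of arbitrary (finite) arity over direction set `D`:
a prefix-closed set of nodes (words over `D`) containing the root, with a labelling. -/
structure STree (D : Type) (A : Type) where
  nodes : Set (List D)
  root_mem : ([] : List D) ∈ nodes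
  prefix_closed : ∀ n d, n ++ [d] ∈ nodes → n ∈ nodes
  label : List D → A

/-- Positive Boolean combinations over atoms `α`. -/
inductive PBF (α : Type) : Type
  | tru : PBF α
  | fls : PBF α
  | atom : α → PBF α
  | and : PBF α → PBF α → PBF α
  | or : PBF α → PBF α → PBF α

def PBF.map {α β : Type} (f : α → β) : PBF α → PBF β
  | .tru => .tru
  | .fls => .fls
  | .atom a => .atom (f a)
  | .and φ ψ => .and (φ.map f) (ψ.map f)
  | .or φ ψ => .or (φ.map f) (ψ.map f)

/-- An EU-pair over state set `Q`: a multiset `E` of states and a set `U` of states. -/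
abbrev EUPair (Q : Type) := Multiset Q × Set Q

def EUPair.map {Q Q' : Type} (f : Q → Q') (p : EUPair Q) : EUPair Q' :=
  (p.1.map f, f '' p.2)

/-- The marking `ν` of the `children` satisfies the EU-pair `p` (relation `⊨⁺`):
some unitary submarking `f` of `ν` matches the existential part `p.1` on a family
`m` of pairwise distinct children and maps every other child into `p.2`. -/
def SatEU {D Q : Type} (children : Set D) (ν : D → Set Q) (p : EUPair Q) : Prop :=
  ∃ f : D → Q, (∀ d ∈ children, f d ∈ ν d) ∧
    ∃ m : Multiset D, m.Nodup ∧ (∀ d ∈ m, d ∈ children) ∧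
      m.map f = p.1 ∧ ∀ d ∈ children, d ∉ m → f d ∈ p.2

/-- `⊨⁺` extended to positive Boolean combinations of EU-pairs. -/
def SatPBF {D Q : Type} (children : Set D) (ν : D → Set Q) : PBF (EUPair Q) → Prop
  | .tru => True
  | .fls => False
  | .atom p => SatEU children ν p
  | .and φ ψ => SatPBF children ν φ ∧ SatPBF children ν ψ
  | .or φ ψ => SatPBF children ν φ ∨ SatPBF children ν ψ

/-- Alternating EU parity tree automaton over alphabet `A`. -/
structure APTA (A : Type) where
  Q : Type
  init : Q
  δ : Q → A → PBF (EUPair Q)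
  ω : Q → ℕ

/-- Parity acceptance for an infinite sequence of priorities: the least priority
occurring infinitely often is even. -/
def ParitySeq (s : ℕ → ℕ) : Prop :=
  Even (sInf {c | {k | s k = c}.Infinite})

namespace APTA

variable {A D : Type}

/-- The automaton state attached to a node of an execution tree. -/
def stateOf (M : APTA A) (e : List (D × M.Q)) : M.Q :=
  match e.getLast? with
  | none => M.init
  | some p => p.2

/-- `et` is an execution tree of `M` over the input tree `T`: a prefix-closed set of
words over `D × Q`, rooted at `[]` (in state `init`), projecting into `T`,
whose induced markings satisfy the transition function everywhere. -/
def IsExecTree (M : APTA A) (T : STree D A) (et : Set (List (D × M.Q))) : Prop :=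
  ([] ∈ et) ∧ (∀ e p, e ++ [p] ∈ et → e ∈ et) ∧
  (∀ e ∈ et, e.map Prod.fst ∈ T.nodes) ∧
  (∀ e ∈ et,
    SatPBF {d | (e.map Prod.fst) ++ [d] ∈ T.nodes}
      (fun d => {q | e ++ [(d, q)] ∈ et})
      (M.δ (M.stateOf e) (T.label (e.map Prod.fst))))

/-- `T` is accepted by `M`: some execution tree all of whose infinite branches
satisfy the parity condition. (Finite branches are accepting.) -/
def Accepts (M : APTA A) (T : STree D A) : Prop :=
  ∃ et : Set (List (D × M.Q)), M.IsExecTree T et ∧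
    ∀ b : ℕ → D × M.Q, (∀ k, (List.range k).map b ∈ et) →
      ParitySeq (fun k => M.ω (b k).2)

/-- The automaton `M` with initial state replaced by `q`. -/
def withInit (M : APTA A) (q : M.Q) : APTA A := { M with init := q }

end APTA

/-- The subtree of `T` rooted at node `n0`. -/
def STree.subAt {D A : Type} (T : STree D A) (n0 : List D) (h : n0 ∈ T.nodes) :
    STree D A where
  nodes := {m | n0 ++ m ∈ T.nodes}
  root_mem := by simpa using h
  prefix_closed := by
    intro n d hm
    have hm' : (n0 ++ n) ++ [d] ∈ T.nodes := by
      simpa [List.append_assoc] using hm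
    exact T.prefix_closed (n0 ++ n) d hm'
  label := fun m => T.label (n0 ++ m)

/-- The subtree of `T` rooted at the successor `d` of the root is accepted by `M`
started in state `q` (false when `d` is not a successor of the root). -/
def AccChild {A D : Type} (M : APTA A) (q : M.Q) (T : STree D A) (d : D) : Prop :=
  ∃ h : [d] ∈ T.nodes, (M.withInit q).Accepts (T.subAt [d] h)

/-- The automaton `A_{▷E}`: a fresh initial state whose transition (on every letter)
is the EU-pair `⟨E;{q⊤}⟩`, the rest of `M` unchanged. -/
def arrow {A : Type} (M : APTA A) (qT : M.Q) (E : Multiset M.Q) : APTA A where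
  Q := Option M.Q
  init := none
  δ := fun q a =>
    match q with
    | none => PBF.atom (E.map some, ({some qT} : Set (Option M.Q)))
    | some q => (M.δ q a).map (EUPair.map some)
  ω := fun q =>
    match q with
    | none => 0
    | some q => M.ω q

/-- The automaton `A_{▷⟨E;U⟩}`: fresh initial state with transition `⟨E;U⟩`. -/
def arrowEU {A : Type} (M : APTA A) (E : Multiset M.Q) (U : Set M.Q) : APTA A where
  Q := Option M.Q
  init := none
  δ := fun q a =>
    match q with
    | none => PBF.atom (E.map some, some '' U)
    | some q => (M.δ q a).map (EUPair.map some)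
  ω := fun q =>
    match q with
    | none => 0
    | some q => M.ω q

/-- A witness (minimal accepting execution tree, restricted to the root level) for
`A_{▷F}` on `T`: pairwise-distinct successors of the root matched with the states
of `F`, each accepting the corresponding subtree. -/
def Witness {A D : Type} (M : APTA A) (T : STree D A) (F : Multiset M.Q)
    (m : Multiset (D × M.Q)) : Prop :=
  (m.map Prod.fst).Nodup ∧ m.map Prod.snd = F ∧ ∀ p ∈ m, AccChild M p.2 T p.1


/-!
Below its root, a run of `A_{▷⟨E;U⟩}` is a family of runs of the automata `A_q` on the direct
subtrees: restricting a run to the paths through a child `(d, q)`, and conversely gluing chosen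
accepting runs under a fresh root, preserve acceptance, since the fresh root is visited once and
does not affect the parity condition. Hence `T` is accepted iff some witness for `E` covers every
direct subtree accepted by no `A_u`, `u ∈ U`. If there are more than `|E|` such subtrees no
witness can cover them; otherwise there are exactly `k ≤ |E|` of them, and a witness covers them
all iff it contains `k` of them.
-/

theorem Multiset.exists_le_map_eq_of_le_map {α β : Type*} {f : α → β} {s : Multiset β}
    {t : Multiset α} (h : s ≤ t.map f) : ∃ b ≤ t, b.map f = s := by
  induction s using Quotient.inductionOn
  induction t using Quotient.inductionOn
  obtain ⟨w, hw, hsub⟩ := h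
  obtain ⟨l, hl, rfl⟩ := List.sublist_map_iff.mp hsub
  exact ⟨l, hl.subperm, Quotient.sound hw⟩

theorem not_exists_cover_iff {α β : Type*} (key : β → α) (n : ℕ)
    (P : Multiset β → Prop) (hP : ∀ m, P m → (m.map key).Nodup ∧ Multiset.card m = n)
    (bad : α → Prop) (badPair : β → Prop) (hbad : ∀ m, P m → ∀ p ∈ m, badPair p ↔ bad (key p)) :
    (¬ ∃ m, P m ∧ ∀ a, bad a → a ∈ m.map key) ↔
      ((∃ s : Multiset α, s.Nodup ∧ n + 1 ≤ Multiset.card s ∧ ∀ a ∈ s, bad a) ∨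
       (∃ k ≤ n, (∃ s : Multiset α, s.Nodup ∧ Multiset.card s = k ∧ ∀ a ∈ s, bad a) ∧
          ¬ ∃ m, P m ∧ ∃ b ≤ m, Multiset.card b = k ∧ ∀ p ∈ b, badPair p)) := by
  constructor
  · intro hno
    refine or_iff_not_imp_left.2 fun hfew => ?_
    have hfin : {a | bad a}.Finite := by
      by_contra hinf
      obtain ⟨t, ht, hcard⟩ := Set.Infinite.exists_subset_card_eq hinf (n + 1)
      exact hfew ⟨t.val, t.nodup, hcard.ge, fun a ha => ht ha⟩
    set t := hfin.toFinset
    have htn : t.card ≤ n := by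
      by_contra! hgt
      exact hfew ⟨t.val, t.nodup, hgt, fun a ha => hfin.mem_toFinset.1 ha⟩
    refine ⟨t.card, htn, ⟨t.val, t.nodup, rfl, fun a ha => hfin.mem_toFinset.1 ha⟩, ?_⟩
    rintro ⟨m, hm, b, hbm, hbk, hbbad⟩
    have hbm' : b.map key ≤ m.map key := Multiset.map_le_map hbm
    have hbt : b.map key ≤ t.val := by
      refine (Multiset.le_iff_subset (Multiset.nodup_of_le hbm' (hP m hm).1)).2 fun a ha => ?_
      obtain ⟨p, hp, rfl⟩ := Multiset.mem_map.1 ha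
      exact hfin.mem_toFinset.2 ((hbad m hm p (Multiset.mem_of_le hbm hp)).1 (hbbad p hp))
    have htb : t.val = b.map key :=
      (Multiset.eq_of_le_of_card_le hbt (by rw [Multiset.card_map, hbk]; rfl)).symm
    exact hno ⟨m, hm, fun a ha => Multiset.mem_of_le hbm' (htb ▸ hfin.mem_toFinset.2 ha)⟩
  · rintro (⟨s, hs, hcard, hsbad⟩ | ⟨k, -, ⟨s, hs, rfl, hsbad⟩, hno⟩) ⟨m, hm, hcov⟩ <;>
    have hsm : s ≤ m.map key := (Multiset.le_iff_subset hs).2 fun a ha => hcov a (hsbad a ha)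
    · have := Multiset.card_le_card hsm
      rw [Multiset.card_map, (hP m hm).2] at this
      omega
    · obtain ⟨b, hbm, rfl⟩ := Multiset.exists_le_map_eq_of_le_map hsm
      exact hno ⟨m, hm, b, hbm, (Multiset.card_map _ _).symm, fun p hp =>
        (hbad m hm p (Multiset.mem_of_le hbm hp)).2 (hsbad _ (Multiset.mem_map_of_mem _ hp))⟩

theorem paritySeq_comp_succ_iff {s : ℕ → ℕ} : ParitySeq (fun k => s (k + 1)) ↔ ParitySeq s := by
  have hshift (c : ℕ) : {k | s (k + 1) = c}.Infinite ↔ {k | s k = c}.Infinite := by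
    rw [← Nat.frequently_atTop_iff_infinite, ← Nat.frequently_atTop_iff_infinite]
    conv_rhs => rw [← Filter.map_add_atTop_eq_nat 1]
    rw [Filter.frequently_map]
  simp only [ParitySeq, hshift]

section SatEU

variable {D Q : Type}

theorem SatEU.mono {C : Set D} {ν ν' : D → Set Q} {p : EUPair Q} (h : SatEU C ν p)
    (hν : ∀ d ∈ C, ∀ q ∈ ν d, q ∈ p.1 ∨ q ∈ p.2 → q ∈ ν' d) : SatEU C ν' p := by
  obtain ⟨f, hf, s, hs, hsC, hsE, hrest⟩ := h
  refine ⟨f, fun d hd => hν d hd _ (hf d hd) ?_, s, hs, hsC, hsE, hrest⟩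
  by_cases hds : d ∈ s
  · exact Or.inl (hsE ▸ Multiset.mem_map_of_mem f hds)
  · exact Or.inr (hrest d hd hds)

theorem satEU_map_some_iff {C : Set D} {ν : D → Set Q} {E : Multiset Q} {U : Set Q} :
    SatEU C (fun d => some '' ν d) (E.map some, some '' U) ↔
      ∃ m : Multiset (D × Q), (m.map Prod.fst).Nodup ∧ m.map Prod.snd = E ∧
        (∀ p ∈ m, p.1 ∈ C ∧ p.2 ∈ ν p.1) ∧
        ∀ d ∈ C, d ∉ m.map Prod.fst → ∃ u ∈ U, u ∈ ν d := by
  classical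
  constructor
  · rintro ⟨f, hf, s, hs, hsC, hsE, hrest⟩
    have hsome (d) (hd : d ∈ s) : (f d).isSome := by
      obtain ⟨q, -, hq⟩ := hf d (hsC d hd)
      simp [← hq]
    refine ⟨s.pmap (fun d hd => (d, (f d).get hd)) hsome, ?_, ?_, ?_, ?_⟩
    · simpa [Multiset.map_pmap, Multiset.pmap_eq_map] using hs
    · apply Multiset.map_injective (Option.some_injective Q)
      simpa [Multiset.map_pmap, Multiset.pmap_eq_map] using hsE
    · simp only [Multiset.mem_pmap]
      rintro _ ⟨d, hd, rfl⟩
      obtain ⟨q, hq, hfq⟩ := hf d (hsC d hd)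
      simp [← hfq, hq, hsC d hd]
    · intro d hd hdm
      obtain ⟨u, hu, hfu⟩ :=
        hrest d hd (by simpa [Multiset.map_pmap, Multiset.pmap_eq_map] using hdm)
      obtain ⟨q, hq, hfq⟩ := hf d hd
      exact ⟨u, hu, Option.some_injective Q (hfu.trans hfq.symm) ▸ hq⟩
  · rintro ⟨m, hm, hmE, hmC, hcover⟩
    have hval (d : D) : ∃ o : Option Q, (∀ p ∈ m, p.1 = d → o = some p.2) ∧
        (d ∈ C → o ∈ some '' ν d ∧ (d ∉ m.map Prod.fst → o ∈ some '' U)) := by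
      by_cases hdm : d ∈ m.map Prod.fst
      · obtain ⟨p, hp, rfl⟩ := Multiset.mem_map.1 hdm
        refine ⟨some p.2, fun p' hp' hpp' => ?_,
          fun _ => ⟨⟨p.2, (hmC p hp).2, rfl⟩, (absurd hdm ·)⟩⟩
        rw [Multiset.inj_on_of_nodup_map hm p' hp' p hp hpp']
      · refine ⟨if hd : d ∈ C then some (hcover d hd hdm).choose else none,
          fun p hp hpd => absurd (hpd ▸ Multiset.mem_map_of_mem _ hp) hdm, fun hd => ?_⟩
        obtain ⟨hu, huν⟩ := (hcover d hd hdm).choose_spec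
        simp only [dif_pos hd]
        exact ⟨⟨_, huν, rfl⟩, fun _ => ⟨_, hu, rfl⟩⟩
    choose f hfm hfC using hval
    refine ⟨f, fun d hd => (hfC d hd).1, m.map Prod.fst, hm, ?_, ?_, fun d hd => (hfC d hd).2⟩
    · intro d hd
      obtain ⟨p, hp, rfl⟩ := Multiset.mem_map.1 hd
      exact (hmC p hp).1
    · rw [← hmE, Multiset.map_map, Multiset.map_map]
      exact Multiset.map_congr rfl fun p hp => hfm p.1 p hp rfl

end SatEU

section SatPBF

variable {D Q Q' : Type}

theorem satPBF_map_iff [Nonempty Q] {g : Q → Q'} (hg : Function.Injective g) {C : Set D}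
    {ν : D → Set Q'} :
    ∀ φ : PBF (EUPair Q), SatPBF C ν (φ.map (EUPair.map g)) ↔ SatPBF C (fun d => g ⁻¹' ν d) φ
  | .tru | .fls => Iff.rfl
  | .atom p => by
    constructor
    · intro h
      obtain ⟨f, hf, s, hs, hsC, hsE, hrest⟩ := h.mono (ν' := fun d => ν d ∩ Set.range g)
        fun d _ q hq hqp => ⟨hq, by
          rcases hqp with hq' | ⟨u, -, rfl⟩
          · obtain ⟨a, -, rfl⟩ := Multiset.mem_map.1 hq'
            exact Set.mem_range_self a
          · exact Set.mem_range_self u⟩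
      dsimp only [EUPair.map] at hsE hrest
      have hfg : ∀ d ∈ C, g (Function.invFun g (f d)) = f d :=
        fun d hd => Function.invFun_eq (hf d hd).2
      refine ⟨Function.invFun g ∘ f, fun d hd => ?_, s, hs, hsC, ?_, fun d hd hds => ?_⟩
      · simpa [hfg d hd] using (hf d hd).1
      · apply Multiset.map_injective hg
        rw [← hsE, Multiset.map_map]
        exact Multiset.map_congr rfl fun d hd => hfg d (hsC d hd)
      · have := hrest d hd hds
        rwa [← hfg d hd, hg.mem_set_image] at this
    · rintro ⟨f, hf, s, hs, hsC, hsE, hrest⟩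
      refine ⟨g ∘ f, hf, s, hs, hsC, ?_, fun d hd hds => Set.mem_image_of_mem g (hrest d hd hds)⟩
      rw [← Multiset.map_map, hsE]
      rfl
  | .and φ ψ => and_congr (satPBF_map_iff hg φ) (satPBF_map_iff hg ψ)
  | .or φ ψ => or_congr (satPBF_map_iff hg φ) (satPBF_map_iff hg ψ)

end SatPBF

section LiftPath

variable {D Q : Type}

/-- A path of `A_q` in the subtree at `d`, read as a path of `A_{▷⟨E;U⟩}` through the child
`(d, q)`; states of the original automaton appear as `some q`. -/
def liftPath (d : D) (q : Q) (e : List (D × Q)) : List (D × Option Q) :=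
  (d, some q) :: e.map (Prod.map id some)

theorem liftPath_inj {d d' : D} {q q' : Q} {e e' : List (D × Q)} :
    liftPath d q e = liftPath d' q' e' ↔ d = d' ∧ q = q' ∧ e = e' := by
  have : Function.Injective (Prod.map (id : D → D) (some : Q → Option Q)) :=
    Function.injective_id.prodMap (Option.some_injective Q)
  simp [liftPath, (List.map_injective_iff.2 this).eq_iff, and_assoc]

theorem liftPath_append_singleton (d : D) (q : Q) (e : List (D × Q)) (p : D × Q) :
    liftPath d q (e ++ [p]) = liftPath d q e ++ [(p.1, some p.2)] := by
  simp [liftPath, Prod.map]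

theorem map_fst_liftPath (d : D) (q : Q) (e : List (D × Q)) :
    (liftPath d q e).map Prod.fst = [d] ++ e.map Prod.fst := by
  simp [liftPath, Function.comp_def]

theorem exists_branch_of_map_range_mem_image_liftPath {d : D} {q : Q} {S : Set (List (D × Q))}
    {B : ℕ → D × Option Q} (hB : ∀ k, (List.range (k + 1)).map B ∈ liftPath d q '' S) :
    ∃ b : ℕ → D × Q, (∀ k, (List.range k).map b ∈ S) ∧
      ∀ k, B (k + 1) = ((b k).1, some (b k).2) := by
  choose e he hlift using hB
  have htail (k : ℕ) : (e k).map (Prod.map id some) = (List.range k).map (fun i => B (i + 1)) := by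
    have := hlift k
    simp only [liftPath, List.range_succ_eq_map, List.map_cons, List.map_map] at this
    exact (List.cons.inj this).2
  set unlift : D × Option Q → D × Q := Prod.map id fun o => o.getD q
  refine ⟨fun k => unlift (B (k + 1)), fun k => ?_, fun k => ?_⟩
  · convert he k using 1
    calc (List.range k).map (fun i => unlift (B (i + 1)))
        = ((e k).map (Prod.map id some)).map unlift := by rw [htail, List.map_map]; rfl
      _ = e k := by rw [List.map_map]; exact List.map_id'' (fun _ => rfl) _
  · obtain ⟨p, -, hp⟩ : ∃ p ∈ e (k + 1), Prod.map id some p = B (k + 1) :=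
      List.mem_map.1 (htail (k + 1) ▸ List.mem_map_of_mem (List.self_mem_range_succ (n := k)))
    show B (k + 1) = ((unlift (B (k + 1))).1, some (unlift (B (k + 1))).2)
    rw [← hp]
    rfl

def glueRuns (P : D → Q → Prop) (R : D → Q → Set (List (D × Q))) : Set (List (D × Option Q)) :=
  insert [] {l | ∃ d q e, P d q ∧ e ∈ R d q ∧ l = liftPath d q e}

variable {P : D → Q → Prop} {R : D → Q → Set (List (D × Q))}

theorem preimage_liftPath_glueRuns {d : D} {q : Q} (h : P d q) :
    liftPath d q ⁻¹' glueRuns P R = R d q := by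
  ext e
  simp only [glueRuns, Set.mem_preimage, Set.mem_insert_iff, Set.mem_ofPred_eq, liftPath_inj]
  constructor
  · rintro (h | ⟨d', q', e', -, he', rfl, rfl, rfl⟩)
    · exact absurd h (List.cons_ne_nil _ _)
    · exact he'
  · exact fun he => Or.inr ⟨d, q, e, h, he, rfl, rfl, rfl⟩

theorem glueRuns_prefix_closed (hR : ∀ d q, P d q → ∀ e p, e ++ [p] ∈ R d q → e ∈ R d q)
    (l : List (D × Option Q)) (p : D × Option Q) (hl : l ++ [p] ∈ glueRuns P R) :
    l ∈ glueRuns P R := by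
  rcases hl with h | ⟨d, q, e, hPdq, he, heq⟩
  · exact absurd h (by simp)
  · rcases List.eq_nil_or_concat' e with rfl | ⟨e, p', rfl⟩
    · obtain rfl : l = [] := by simpa [liftPath] using congrArg List.dropLast heq
      exact Set.mem_insert _ _
    · rw [liftPath_append_singleton] at heq
      obtain ⟨rfl, -⟩ := List.append_inj' heq rfl
      exact Or.inr ⟨d, q, e, hPdq, hR d q hPdq e p' he, rfl⟩

theorem exists_branch_of_forall_mem_glueRuns {B : ℕ → D × Option Q}
    (hB : ∀ k, (List.range k).map B ∈ glueRuns P R) :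
    ∃ d q, P d q ∧ ∃ b : ℕ → D × Q, (∀ k, (List.range k).map b ∈ R d q) ∧
      ∀ k, B (k + 1) = ((b k).1, some (b k).2) := by
  have hpath (k : ℕ) : ∃ d q e, P d q ∧ e ∈ R d q ∧
      (List.range (k + 1)).map B = liftPath d q e := by
    rcases hB (k + 1) with h | h
    · simp at h
    · exact h
  have hhead (k : ℕ) : ((List.range (k + 1)).map B).head? = some (B 0) := by
    simp [List.range_succ_eq_map]
  obtain ⟨d, q, e₀, hPdq, -, h₀⟩ := hpath 0
  have hB0 : B 0 = (d, some q) := by simpa [hhead, liftPath] using congrArg List.head? h₀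
  refine ⟨d, q, hPdq, exists_branch_of_map_range_mem_image_liftPath (d := d) (q := q) fun k => ?_⟩
  obtain ⟨d', q', e, -, he, hk⟩ := hpath k
  have hd' : B 0 = (d', some q') := by simpa [hhead, liftPath] using congrArg List.head? hk
  obtain ⟨rfl, rfl⟩ : d' = d ∧ q' = q := by simpa [hB0] using hd'.symm
  exact ⟨e, he, hk.symm⟩

end LiftPath

def APTA.IsAcceptingRun {A D : Type} (M : APTA A) (T : STree D A) (et : Set (List (D × M.Q))) :
    Prop :=
  M.IsExecTree T et ∧
    ∀ b : ℕ → D × M.Q, (∀ k, (List.range k).map b ∈ et) → ParitySeq (fun k => M.ω (b k).2)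

theorem APTA.stateOf_eq {A D : Type} (M : APTA A) (e : List (D × M.Q)) :
    M.stateOf e = (e.getLast?.map Prod.snd).getD M.init := by
  unfold APTA.stateOf
  cases e.getLast? <;> rfl

section ArrowEU

variable {A D : Type} {M : APTA A} {E : Multiset M.Q} {U : Set M.Q} {T : STree D A}
  {d : D} {q : M.Q}

theorem stateOf_liftPath (d : D) (q : M.Q) (e : List (D × M.Q)) :
    (arrowEU M E U).stateOf (liftPath d q e) = some ((M.withInit q).stateOf e) := by
  have h₁ := APTA.stateOf_eq (arrowEU M E U) (liftPath d q e)
  have h₂ := APTA.stateOf_eq (M.withInit q) e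
  rw [h₁, h₂]
  change ((liftPath d q e).getLast?.map Prod.snd).getD none =
    some ((e.getLast?.map Prod.snd).getD q)
  rcases List.eq_nil_or_concat' e with rfl | ⟨e, p, rfl⟩
  · rfl
  · simp [liftPath_append_singleton]

/-- The left side is the transition condition of `A_q` on the subtree at `d`, at node `e` of the
run `liftPath d q ⁻¹' ET`, with `withInit` and `subAt` unfolded. -/
theorem satPBF_liftPath_iff (ET : Set (List (D × Option M.Q)))
    (e : List (D × M.Q)) :
    SatPBF {d' | [d] ++ (e.map Prod.fst ++ [d']) ∈ T.nodes}
        (fun d' => {q' : M.Q | liftPath d q (e ++ [(d', q')]) ∈ ET})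
        (M.δ ((M.withInit q).stateOf e) (T.label ([d] ++ e.map Prod.fst))) ↔
      SatPBF {d' | (liftPath d q e).map Prod.fst ++ [d'] ∈ T.nodes}
        (fun d' => {o : Option M.Q | liftPath d q e ++ [(d', o)] ∈ ET})
        ((arrowEU M E U).δ ((arrowEU M E U).stateOf (liftPath d q e))
          (T.label ((liftPath d q e).map Prod.fst))) := by
  have : Nonempty M.Q := ⟨q⟩
  simp only [liftPath_append_singleton, map_fst_liftPath, stateOf_liftPath, List.append_assoc]
  exact (satPBF_map_iff (ν := fun d' => {o : Option M.Q | liftPath d q e ++ [(d', o)] ∈ ET})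
    (Option.some_injective M.Q) _).symm

theorem APTA.IsExecTree.preimage_liftPath {ET : Set (List (D × Option M.Q))}
    (hET : (arrowEU M E U).IsExecTree T ET) (hd : [d] ∈ T.nodes) (hq : [(d, some q)] ∈ ET) :
    (M.withInit q).IsExecTree (T.subAt [d] hd) (liftPath d q ⁻¹' ET) := by
  obtain ⟨-, hpre, hproj, hsat⟩ := hET
  refine ⟨hq, ?_, ?_, fun e he => (satPBF_liftPath_iff (E := E) (U := U) ET e).2 (hsat _ he)⟩
  · intro (e : List (D × M.Q)) (p : D × M.Q) (he : liftPath d q (e ++ [p]) ∈ ET)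
    rw [liftPath_append_singleton] at he
    exact hpre _ _ he
  · intro (e : List (D × M.Q)) (he : liftPath d q e ∈ ET)
    show [d] ++ e.map Prod.fst ∈ T.nodes
    rw [← map_fst_liftPath d q]
    exact hproj _ he

theorem accChild_of_mem_acceptingRun {ET : Set (List (D × Option M.Q))}
    (hET : (arrowEU M E U).IsAcceptingRun T ET) (hd : [d] ∈ T.nodes)
    (hq : [(d, some q)] ∈ ET) : AccChild M q T d := by
  refine ⟨hd, _, hET.1.preimage_liftPath hd hq, fun (b : ℕ → D × M.Q)
    (hb : ∀ k, liftPath d q ((List.range k).map b) ∈ ET) => ?_⟩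
  let B : ℕ → D × Option M.Q
    | 0 => (d, some q)
    | k + 1 => ((b k).1, some (b k).2)
  have hB : ∀ k, (List.range k).map B ∈ ET
    | 0 => hET.1.1
    | k + 1 => by
      convert hb k using 1
      simp only [B, liftPath, List.range_succ_eq_map, List.map_cons, List.map_map]
      rfl
  exact (paritySeq_comp_succ_iff (s := fun k => (arrowEU M E U).ω (B k).2)).2 (hET.2 B hB)

theorem accepts_arrowEU_of_satEU
    (h : SatEU {d | [d] ∈ T.nodes} (fun d => some '' {q | AccChild M q T d})
      (E.map some, some '' U)) :
    (arrowEU M E U).Accepts T := by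
  have hrun (d : D) (q : M.Q) : ∃ et : Set (List (D × M.Q)),
      ∀ h : AccChild M q T d, (M.withInit q).IsAcceptingRun (T.subAt [d] h.1) et := by
    by_cases hacc : AccChild M q T d
    · obtain ⟨et, het⟩ := hacc.2
      exact ⟨et, fun _ => het⟩
    · exact ⟨∅, fun h => absurd h hacc⟩
  choose run hrun using hrun
  refine ⟨glueRuns (fun d q => AccChild M q T d) run, ⟨Set.mem_insert _ _,
    glueRuns_prefix_closed fun d q hacc => (hrun d q hacc).1.2.1, ?_, ?_⟩, ?_⟩
  · rintro l (rfl | ⟨d, q, e, hacc, he, rfl⟩)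
    · exact T.root_mem
    · show (liftPath d q e).map Prod.fst ∈ T.nodes
      rw [map_fst_liftPath]
      exact (hrun d q hacc).1.2.2.1 e he
  · rintro l (rfl | ⟨d, q, e, hacc, he, rfl⟩)
    · exact h.mono fun d _ o ⟨q, hq, ho⟩ _ => Or.inr ⟨d, q, [], hq, (hrun d q hq).1.1, ho ▸ rfl⟩
    · have hsat := (hrun d q hacc).1.2.2.2 e he
      rw [← preimage_liftPath_glueRuns (P := fun d q => AccChild M q T d) (R := run) hacc] at hsat
      exact (satPBF_liftPath_iff _ e).1 hsat
  · intro (B : ℕ → D × Option M.Q) hB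
    obtain ⟨d, q, hacc, b, hb, hBb⟩ := exists_branch_of_forall_mem_glueRuns hB
    refine paritySeq_comp_succ_iff.1 ?_
    simp only [hBb]
    exact (hrun d q hacc).2 b hb

theorem satEU_of_accepts_arrowEU (h : (arrowEU M E U).Accepts T) :
    SatEU {d | [d] ∈ T.nodes} (fun d => some '' {q | AccChild M q T d})
      (E.map some, some '' U) := by
  obtain ⟨ET, hET⟩ := h
  have hroot : SatEU {d | [d] ∈ T.nodes} (fun d => {o : Option M.Q | [(d, o)] ∈ ET})
      (E.map some, some '' U) :=
    hET.1.2.2.2 [] hET.1.1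
  refine hroot.mono fun d hd o ho hEU => ?_
  obtain ⟨q, rfl⟩ : ∃ q, o = some q := by
    rcases hEU with hE | ⟨q, -, rfl⟩
    · obtain ⟨q, -, rfl⟩ := Multiset.mem_map.1 hE
      exact ⟨q, rfl⟩
    · exact ⟨q, rfl⟩
  exact ⟨q, accChild_of_mem_acceptingRun hET hd ho, rfl⟩

theorem accepts_arrowEU_iff :
    (arrowEU M E U).Accepts T ↔ ∃ m, Witness M T E m ∧
      ∀ d, ([d] ∈ T.nodes ∧ ∀ u ∈ U, ¬ AccChild M u T d) → d ∈ m.map Prod.fst := by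
  rw [← satEU_map_some_iff.trans (exists_congr fun m => ?_)]
  · exact ⟨satEU_of_accepts_arrowEU, accepts_arrowEU_of_satEU⟩
  constructor
  · rintro ⟨hnd, hE, hacc, hcov⟩
    refine ⟨⟨hnd, hE, fun p hp => (hacc p hp).2⟩, fun d ⟨hd, hbad⟩ => ?_⟩
    by_contra hdm
    obtain ⟨u, hu, hacc'⟩ := hcov d hd hdm
    exact hbad u hu hacc'
  · rintro ⟨⟨hnd, hE, hacc⟩, hcov⟩
    refine ⟨hnd, hE, fun p hp => ⟨(hacc p hp).1, hacc p hp⟩, fun d hd hdm => ?_⟩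
    by_contra! hbad
    exact hdm (hcov d ⟨hd, hbad⟩)

end ArrowEU

/-- `T` is not accepted by `A_{▷⟨E;U⟩}` iff either (a) at least
`|E|+1` direct subtrees are accepted by no `A_u` (`u ∈ U`), or (b) there is
`0 ≤ k ≤ |E|` such that at least `k` direct subtrees are accepted by no `A_u`,
and there do not exist `|E|` direct subtrees witnessing the existential part `E`
of which at least `k` are accepted by no `A_u`. -/
theorem stmt7 (A D : Type) (M : APTA A)
    (T : STree D A) (E : Multiset M.Q) (U : Set M.Q) :
    ¬ (arrowEU M E U).Accepts T ↔
      ((∃ s : Multiset D, s.Nodup ∧ Multiset.card E + 1 ≤ Multiset.card s ∧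
          ∀ d ∈ s, [d] ∈ T.nodes ∧ ∀ u ∈ U, ¬ AccChild M u T d) ∨
       (∃ k ≤ Multiset.card E,
          (∃ s : Multiset D, s.Nodup ∧ Multiset.card s = k ∧
            ∀ d ∈ s, [d] ∈ T.nodes ∧ ∀ u ∈ U, ¬ AccChild M u T d) ∧
          ¬ ∃ m : Multiset (D × M.Q), Witness M T E m ∧
              ∃ b ≤ m, Multiset.card b = k ∧
                ∀ p ∈ b, ∀ u ∈ U, ¬ AccChild M u T p.1)) := by
  rw [accepts_arrowEU_iff]
  exact not_exists_cover_iff Prod.fst (Multiset.card E) (Witness M T E)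
    (fun m hm => ⟨hm.1, by rw [← hm.2.1, Multiset.card_map]⟩) _ _
    (fun m hm p hp => ⟨fun hbad => ⟨(hm.2.2 p hp).1, hbad⟩, And.right⟩)
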